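/- For all complex numbers x₁, x₂, x₃, x₄, y₁, y₂, y₃, y₄, the 8×6 complex matrix M₂₄ with rows (1,0,1,0,0,−1), (0,1,0,1,−1,0), (x₂,x₁,x₂,x₁,x₁,x₂), (x₄,x₃,x₄,x₃,x₃,x₄), (0,0,1,0,0,1), (0,0,0,1,1,0), (0,0,y₁,y₂,−y₂,−y₁), (0,0,y₃,y₄,−y₄,−y₃) has rank at most 5 if and only if the 4×2 matrix A₁(x,y) has rank at most 1. -/

import Mathlib

/-!
A kernel vector `v` of `M₂₄` is determined by `w = (v₄, v₅)`: the four rows with constant entries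
force `v = (2w₁, 2w₀, -w₁, -w₀, w₀, w₁)`, and the other four rows then reduce to `A₁ w = 0`.
Hence the injective map `w ↦ (2w₁, 2w₀, -w₁, -w₀, w₀, w₁)` carries `ker A₁` onto `ker M₂₄`, and
rank–nullity gives `rank M₂₄ = rank A₁ + 4`.
-/

open Matrix

/-- The 4×2 matrix `A₁(x,y)` with rows `(x₁,x₂), (x₃,x₄), (y₂,y₁), (y₄,y₃)`. -/
def A1 (x₁ x₂ x₃ x₄ y₁ y₂ y₃ y₄ : ℂ) : Matrix (Fin 4) (Fin 2) ℂ :=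
  !![x₁, x₂; x₃, x₄; y₂, y₁; y₄, y₃]

/-- The Wyser–Yong matrix `M₂₄` restricted to the normal slice. -/
def M24 (x₁ x₂ x₃ x₄ y₁ y₂ y₃ y₄ : ℂ) : Matrix (Fin 8) (Fin 6) ℂ :=
  !![1, 0, 1, 0, 0, -1;
     0, 1, 0, 1, -1, 0;
     x₂, x₁, x₂, x₁, x₁, x₂;
     x₄, x₃, x₄, x₃, x₃, x₄;
     0, 0, 1, 0, 0, 1;
     0, 0, 0, 1, 1, 0;
     0, 0, y₁, y₂, -y₂, -y₁;
     0, 0, y₃, y₄, -y₄, -y₃]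

open Module LinearMap

theorem Matrix.rank_add_finrank_ker {K m n : Type*} [Field K] [Fintype n] (A : Matrix m n K) :
    A.rank + finrank K (ker A.mulVecLin) = Fintype.card n := by
  simpa [Matrix.rank] using finrank_range_add_finrank_ker A.mulVecLin

theorem Matrix.rank_add_card_eq_of_ker_eq_map {K m n m' n' : Type*} [Field K] [Fintype n]
    [Fintype n'] (A : Matrix m n K) (B : Matrix m' n' K) (f : (n → K) →ₗ[K] n' → K)
    (hf : Function.Injective f) (hker : ker B.mulVecLin = (ker A.mulVecLin).map f) :
    B.rank + Fintype.card n = A.rank + Fintype.card n' := by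
  have hnullity : finrank K (ker B.mulVecLin) = finrank K (ker A.mulVecLin) := by
    rw [hker]
    exact (Submodule.equivMapOfInjective f hf _).finrank_eq.symm
  have := A.rank_add_finrank_ker
  have := B.rank_add_finrank_ker
  omega

section

variable (x₁ x₂ x₃ x₄ y₁ y₂ y₃ y₄ : ℂ)

lemma M24_mulVec (v : Fin 6 → ℂ) :
    M24 x₁ x₂ x₃ x₄ y₁ y₂ y₃ y₄ *ᵥ v =
      ![v 0 + v 2 - v 5, v 1 + v 3 - v 4,
        x₂ * (v 0 + v 2 + v 5) + x₁ * (v 1 + v 3 + v 4),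
        x₄ * (v 0 + v 2 + v 5) + x₃ * (v 1 + v 3 + v 4),
        v 2 + v 5, v 3 + v 4,
        y₁ * (v 2 - v 5) + y₂ * (v 3 - v 4), y₃ * (v 2 - v 5) + y₄ * (v 3 - v 4)] := by
  ext i
  fin_cases i <;> simp [M24, mulVec, dotProduct, Fin.sum_univ_succ] <;> ring

lemma A1_mulVec (w : Fin 2 → ℂ) :
    A1 x₁ x₂ x₃ x₄ y₁ y₂ y₃ y₄ *ᵥ w =
      ![x₁ * w 0 + x₂ * w 1, x₃ * w 0 + x₄ * w 1, y₂ * w 0 + y₁ * w 1, y₄ * w 0 + y₃ * w 1] := by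
  ext i
  fin_cases i <;> simp [A1, mulVec, dotProduct, Fin.sum_univ_succ]

end

def M24KerLift : Matrix (Fin 6) (Fin 2) ℂ := !![0, 2; 2, 0; 0, -1; -1, 0; 1, 0; 0, 1]

lemma M24KerLift_mulVec (w : Fin 2 → ℂ) :
    M24KerLift *ᵥ w = ![2 * w 1, 2 * w 0, -w 1, -w 0, w 0, w 1] := by
  ext i
  fin_cases i <;> simp [M24KerLift, mulVec, dotProduct, Fin.sum_univ_succ]

lemma M24KerLift_mulVecLin_injective : Function.Injective M24KerLift.mulVecLin := by
  refine (injective_iff_map_eq_zero _).2 fun w hw => ?_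
  simp only [mulVecLin_apply, M24KerLift_mulVec, cons_eq_zero_iff] at hw
  ext i
  fin_cases i <;> simp [hw]

lemma ker_M24_mulVecLin (x₁ x₂ x₃ x₄ y₁ y₂ y₃ y₄ : ℂ) :
    ker (M24 x₁ x₂ x₃ x₄ y₁ y₂ y₃ y₄).mulVecLin =
      (ker (A1 x₁ x₂ x₃ x₄ y₁ y₂ y₃ y₄).mulVecLin).map M24KerLift.mulVecLin := by
  ext v
  simp only [mem_ker, Submodule.mem_map, mulVecLin_apply, M24_mulVec, A1_mulVec,
    M24KerLift_mulVec, cons_eq_zero_iff, zero_empty, and_true]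
  constructor
  · rintro ⟨e0, e1, e2, e3, e4, e5, e6, e7⟩
    refine ⟨![v 4, v 5], ?_, ?_⟩
    · simp only [cons_val_zero, cons_val_one]
      exact ⟨by linear_combination (e2 - x₂ * e0 - x₁ * e1) / 2,
        by linear_combination (e3 - x₄ * e0 - x₃ * e1) / 2,
        by linear_combination (y₁ * e4 + y₂ * e5 - e6) / 2,
        by linear_combination (y₃ * e4 + y₄ * e5 - e7) / 2⟩
    · ext i
      fin_cases i <;> simp only [Fin.reduceFinMk, cons_val]
      exacts [by linear_combination e4 - e0, by linear_combination e5 - e1,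
        by linear_combination -e4, by linear_combination -e5]
  · rintro ⟨w, ⟨f0, f1, f2, f3⟩, rfl⟩
    simp only [cons_val]
    exact ⟨by ring, by ring, by linear_combination 2 * f0, by linear_combination 2 * f1,
      by ring, by ring, by linear_combination -2 * f2, by linear_combination -2 * f3⟩

lemma rank_M24 (x₁ x₂ x₃ x₄ y₁ y₂ y₃ y₄ : ℂ) :
    (M24 x₁ x₂ x₃ x₄ y₁ y₂ y₃ y₄).rank = (A1 x₁ x₂ x₃ x₄ y₁ y₂ y₃ y₄).rank + 4 := by
  have := rank_add_card_eq_of_ker_eq_map _ _ _ M24KerLift_mulVecLin_injective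
    (ker_M24_mulVecLin x₁ x₂ x₃ x₄ y₁ y₂ y₃ y₄)
  simp only [Fintype.card_fin] at this
  omega

theorem stmt9 (x₁ x₂ x₃ x₄ y₁ y₂ y₃ y₄ : ℂ) :
    (M24 x₁ x₂ x₃ x₄ y₁ y₂ y₃ y₄).rank ≤ 5 ↔
      (A1 x₁ x₂ x₃ x₄ y₁ y₂ y₃ y₄).rank ≤ 1 := by
  rw [rank_M24]
  omega
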